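/- Let l ≥ 2 be a natural number and set N = 4l. Work in Λ(ℂ^N), and set ω₀ := Σ_{j=1}^{2l−1} e_{2j−1}∧e_{2j}. Then: (a) for every vector v in the linear span of the first 4l−1 standard basis vectors of ℂ^{4l}, if ι(v)∧ω₀ = 0 then v = 0; (b) consequently, if λ_{ij} ∈ ℂ (1 ≤ i < j ≤ 4l) are scalars such that (Σ_{i=1}^{4l−1} λ_{i,4l}·e_i) ∧ ω₀ = 0, then λ_{i,4l} = 0 for all 1 ≤ i ≤ 4l−1, and the 2-form ω̃ := Σ_{1≤i<j≤4l} λ_{ij}·e_i∧e_j satisfies ω̃^{2l} = 0. -/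

import Mathlib

/-!
Since `ω₀` has rank `2(2l - 1) ≥ 4`, every coordinate `k` of `ℂ^{4l}` is avoided by some pair
`(2j₀ - 1, 2j₀)` of `ω₀`; the `3 × 3` minor on the coordinates `k, 2j₀ - 1, 2j₀` then reads off
`v_k` from `ι(v) ∧ ω₀`, so wedging with `ω₀` is injective on vectors. Hence the `λ_{i,4l}`
vanish, so `ω̃` lies in the square of the image of the `(4l - 1)`-dimensional span `W` of
`e_1, …, e_{4l-1}`, and `ω̃^{2l}` lies in `⋀^{4l} W = 0`.
-/

/-- The 1-based `i`-th standard basis vector of `ℂ^N` (zero if `i` is out of range). -/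
def sv (N : ℕ) (i : ℕ) : Fin N → ℂ :=
  fun k => if (k : ℕ) + 1 = i then (1 : ℂ) else 0

/-- The 1-based `i`-th standard basis vector of `ℂ^N`, viewed inside the
exterior algebra `Λ(ℂ^N)` via the canonical inclusion `ι`. -/
noncomputable def e (N : ℕ) (i : ℕ) : ExteriorAlgebra ℂ (Fin N → ℂ) :=
  ExteriorAlgebra.ι ℂ (sv N i)

open ExteriorAlgebra Module

namespace ExteriorAlgebra

section Minor

variable {R M : Type*} [CommRing R] [AddCommGroup M] [Module R M]

noncomputable def minorForm {n : ℕ} (f : Fin n → Dual R M) : ExteriorAlgebra R M →ₗ[R] R :=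
  liftAlternating (Pi.single n (Matrix.detRowAlternating.compLinearMap (LinearMap.pi f)))

theorem minorForm_ιMulti {n : ℕ} (f : Fin n → Dual R M) (v : Fin n → M) :
    minorForm f (ιMulti R n v) = (Matrix.of fun i k => f k (v i)).det := by
  rw [minorForm, liftAlternating_apply_ιMulti, Pi.single_eq_same]
  rfl

theorem ι_mul_ι_mul_ι (x y z : M) : ι R x * (ι R y * ι R z) = ιMulti R 3 ![x, y, z] := by
  simp [ιMulti_apply]

end Minor

theorem map_ι_pow_eq_bot {K M : Type*} [Field K] [AddCommGroup M] [Module K M]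
    (W : Submodule K M) [FiniteDimensional K W] {n : ℕ} (hn : finrank K W < n) :
    W.map (ι K) ^ n = ⊥ := by
  have hW : ⋀[K]^n W = ⊥ := by
    rw [← Submodule.finrank_eq_zero, exteriorPower.finrank_eq, Nat.choose_eq_zero_of_lt hn]
  have hmap : W.map (ι K) = (LinearMap.range (ι K)).map (map W.subtype).toLinearMap := by
    rw [LinearMap.range_eq_map, ← Submodule.map_comp, map_comp_ι, Submodule.map_comp,
      ← LinearMap.range_eq_map, Submodule.range_subtype]
  rw [hmap, ← Submodule.map_pow, ← ExteriorAlgebra.exteriorPower, hW, Submodule.map_bot]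

end ExteriorAlgebra

theorem sum_smul_sv_apply (N n : ℕ) (c : ℕ → ℂ) (k : Fin N) :
    (∑ i ∈ Finset.Icc 1 n, c i • sv N i) k = if (k : ℕ) + 1 ≤ n then c (k + 1) else 0 := by
  simp [sv, Finset.sum_apply]

theorem finrank_span_sv_le (N n : ℕ) :
    finrank ℂ (Submodule.span ℂ {x | ∃ i, 1 ≤ i ∧ i ≤ n ∧ x = sv N i}) ≤ n := by
  have hset : {x | ∃ i, 1 ≤ i ∧ i ≤ n ∧ x = sv N i} =
      ((Finset.Icc 1 n).image (sv N) : Set (Fin N → ℂ)) := by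
    ext x
    simp [eq_comm, and_assoc]
  rw [hset]
  calc _ ≤ ((Finset.Icc 1 n).image (sv N)).card := finrank_span_finset_le_card _
    _ ≤ (Finset.Icc 1 n).card := Finset.card_image_le
    _ = n := by simp

theorem minorForm_ι_mul_e_mul_e {N : ℕ} (p q r : Fin N) (v : Fin N → ℂ) (a b : ℕ) :
    minorForm ![LinearMap.proj p, LinearMap.proj q, LinearMap.proj r] (ι ℂ v * (e N a * e N b)) =
      !![v p, v q, v r; sv N a p, sv N a q, sv N a r; sv N b p, sv N b q, sv N b r].det := by
  rw [e, e, ι_mul_ι_mul_ι, minorForm_ιMulti]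
  congr
  ext i k
  fin_cases i <;> fin_cases k <;> rfl

noncomputable def darbouxForm (N m : ℕ) : ExteriorAlgebra ℂ (Fin N → ℂ) :=
  ∑ j ∈ Finset.Icc 1 m, e N (2 * j - 1) * e N (2 * j)

theorem eq_zero_of_ι_mul_darbouxForm_eq_zero {N m : ℕ} (hm : 2 ≤ m) (hN : 2 * m ≤ N)
    {v : Fin N → ℂ} (hv : ι ℂ v * darbouxForm N m = 0) : v = 0 := by
  funext k
  obtain ⟨j₀, hj₀, hk⟩ : ∃ j₀ ∈ Finset.Icc 1 m,
      (k : ℕ) + 1 ≠ 2 * j₀ - 1 ∧ (k : ℕ) + 1 ≠ 2 * j₀ := by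
    by_cases hk : (k : ℕ) ≤ 1
    · exact ⟨2, by simp; omega, by omega⟩
    · exact ⟨1, by simp; omega, by omega⟩
  have hj₀' := Finset.mem_Icc.1 hj₀
  have hminor := congrArg (minorForm ![LinearMap.proj k, LinearMap.proj ⟨2 * j₀ - 2, by omega⟩,
    LinearMap.proj ⟨2 * j₀ - 1, by omega⟩]) hv
  rw [darbouxForm, Finset.mul_sum, map_sum, map_zero, Finset.sum_eq_single_of_mem j₀ hj₀]
    at hminor
  · simpa [minorForm_ι_mul_e_mul_e, Matrix.det_fin_three, sv, hk,
      show 2 * j₀ - 2 + 1 = 2 * j₀ - 1 by omega, show 2 * j₀ - 1 + 1 = 2 * j₀ by omega,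
      show 2 * j₀ - 1 ≠ 2 * j₀ by omega] using hminor
  · intro j hj hne
    have hj' := Finset.mem_Icc.1 hj
    simp only [minorForm_ι_mul_e_mul_e, Matrix.det_fin_three, sv]
    -- `{2j - 1, 2j}` meets `{k + 1, 2j₀ - 1, 2j₀}` in at most one index, so a row vanishes
    split_ifs <;> first | omega | simp

theorem coeff_eq_zero_of_sum_smul_e_mul_darbouxForm_eq_zero {N m n : ℕ} (hm : 2 ≤ m)
    (hN : 2 * m ≤ N) {c : ℕ → ℂ} (h : (∑ i ∈ Finset.Icc 1 n, c i • e N i) * darbouxForm N m = 0)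
    {i : ℕ} (hi₁ : 1 ≤ i) (hin : i ≤ n) (hiN : i ≤ N) : c i = 0 := by
  have hv := eq_zero_of_ι_mul_darbouxForm_eq_zero hm hN
    (v := ∑ i ∈ Finset.Icc 1 n, c i • sv N i) (by simpa [e] using h)
  have hi := congrFun hv ⟨i - 1, by omega⟩
  rwa [sum_smul_sv_apply, if_pos (by simp; omega), Nat.sub_add_cancel hi₁] at hi

theorem sum_smul_e_mul_e_pow_eq_zero {N k : ℕ} (hN : 0 < N) (hk : N ≤ 2 * k) (lam : ℕ → ℕ → ℂ)
    (hlam : ∀ i, 1 ≤ i → i ≤ N - 1 → lam i N = 0) :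
    (∑ i ∈ Finset.Icc 1 N, ∑ j ∈ Finset.Icc (i + 1) N, lam i j • (e N i * e N j)) ^ k = 0 := by
  set W := Submodule.span ℂ {x | ∃ i, 1 ≤ i ∧ i ≤ N - 1 ∧ x = sv N i}
  have he : ∀ i, 1 ≤ i → i ≤ N - 1 → e N i ∈ W.map (ι ℂ) := fun i hi₁ hi =>
    Submodule.mem_map_of_mem (Submodule.subset_span ⟨i, hi₁, hi, rfl⟩)
  have hmem : (∑ i ∈ Finset.Icc 1 N, ∑ j ∈ Finset.Icc (i + 1) N, lam i j • (e N i * e N j)) ∈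
      W.map (ι ℂ) ^ 2 := by
    refine Submodule.sum_mem _ fun i hi => Submodule.sum_mem _ fun j hj => ?_
    rw [Finset.mem_Icc] at hi hj
    obtain rfl | hjN := eq_or_lt_of_le hj.2
    · simp [hlam i hi.1 (by omega)]
    · exact Submodule.smul_mem _ _ (pow_two (W.map (ι ℂ)) ▸
        Submodule.mul_mem_mul (he i hi.1 (by omega)) (he j (by omega) (by omega)))
  have hpow := Submodule.pow_mem_pow _ hmem k
  rwa [← pow_mul, map_ι_pow_eq_bot W ((finrank_span_sv_le N (N - 1)).trans_lt (by omega)),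
    Submodule.mem_bot] at hpow

/-- in `Λ(ℂ^{4l})` (`l ≥ 2`), with `ω₀ := Σ_{j=1}^{2l−1} e_{2j−1}∧e_{2j}`:
(a) wedging with `ω₀` is injective on the span of the first `4l−1` standard basis
vectors; (b) consequently, if `(Σ_{i=1}^{4l−1} λ_{i,4l}·e_i) ∧ ω₀ = 0` then all
`λ_{i,4l} = 0` (`1 ≤ i ≤ 4l−1`) and `ω̃ := Σ_{1≤i<j≤4l} λ_{ij}·e_i∧e_j` satisfies
`ω̃^{2l} = 0`. -/
theorem stmt_13 (l : ℕ) (hl : 2 ≤ l) :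
    (∀ v : Fin (4 * l) → ℂ,
      v ∈ Submodule.span ℂ {x | ∃ i, 1 ≤ i ∧ i ≤ 4 * l - 1 ∧ x = sv (4 * l) i} →
      ExteriorAlgebra.ι ℂ v *
        (∑ j ∈ Finset.Icc 1 (2 * l - 1), e (4 * l) (2 * j - 1) * e (4 * l) (2 * j)) = 0 →
      v = 0) ∧
    (∀ lam : ℕ → ℕ → ℂ,
      (∑ i ∈ Finset.Icc 1 (4 * l - 1), lam i (4 * l) • e (4 * l) i) *
        (∑ j ∈ Finset.Icc 1 (2 * l - 1), e (4 * l) (2 * j - 1) * e (4 * l) (2 * j)) = 0 →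
      (∀ i, 1 ≤ i → i ≤ 4 * l - 1 → lam i (4 * l) = 0) ∧
      (∑ i ∈ Finset.Icc 1 (4 * l), ∑ j ∈ Finset.Icc (i + 1) (4 * l),
          lam i j • (e (4 * l) i * e (4 * l) j)) ^ (2 * l) = 0) := by
  have hm : 2 ≤ 2 * l - 1 := by omega
  have hN : 2 * (2 * l - 1) ≤ 4 * l := by omega
  refine ⟨fun v _ hv => eq_zero_of_ι_mul_darbouxForm_eq_zero hm hN hv, fun lam h => ?_⟩
  have hlam : ∀ i, 1 ≤ i → i ≤ 4 * l - 1 → lam i (4 * l) = 0 := fun i hi₁ hi =>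
    coeff_eq_zero_of_sum_smul_e_mul_darbouxForm_eq_zero hm hN h hi₁ hi (by omega)
  exact ⟨hlam, sum_smul_e_mul_e_pow_eq_zero (by omega) (by omega) lam hlam⟩
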